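/- Let P and Q be probability mass functions on a finite set X, and let f(d) = Σ_{x∈X} P(x)·log(d(x)) + Σ_{x∈X} Q(x)·log(1 - d(x)) for d : X → (0,1). Then for each x with P(x)+Q(x) > 0, the pointwise maximizer of a·log(t) + b·log(1-t) over t ∈ (0,1) with a = P(x), b = Q(x) is t = a/(a+b); hence the discriminator d*(x) = P(x)/(P(x)+Q(x)) maximizes f. -/

import Mathlib

/-!
Pointwise, `log s ≤ s - 1` applied at `s = t (a + b) / a` gives
`a log t ≤ a log (a / (a + b)) + ((a + b) t - a)`, and the same with `b` and `1 - t`. Adding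
the two, the linear error terms cancel, so `t = a / (a + b)` maximizes `a log t + b log (1 - t)`.
Summing over `x` gives the optimality of `d*`.
-/

open Real Finset

lemma mul_log_le_mul_log_div_add {a c s : ℝ} (ha : 0 ≤ a) (hc : 0 < c) (hs : 0 < s) :
    a * log s ≤ a * log (a / c) + (c * s - a) := by
  rcases ha.eq_or_lt with rfl | ha
  · simpa using (mul_pos hc hs).le
  have key : log (c * s / a) ≤ c * s / a - 1 := log_le_sub_one_of_pos (by positivity)
  rw [log_div (by positivity) ha.ne', log_mul hc.ne' hs.ne'] at key
  rw [log_div ha.ne' hc.ne']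
  have hmul := mul_le_mul_of_nonneg_left key ha.le
  rw [mul_sub a (c * s / a), mul_div_cancel₀ (c * s) ha.ne'] at hmul
  linarith

lemma mul_log_add_mul_log_one_sub_le {a b t : ℝ} (ha : 0 ≤ a) (hb : 0 ≤ b)
    (ht : t ∈ Set.Ioo (0 : ℝ) 1) :
    a * log t + b * log (1 - t) ≤ a * log (a / (a + b)) + b * log (1 - a / (a + b)) := by
  obtain ⟨ht0, ht1⟩ := ht
  rcases (add_nonneg ha hb).eq_or_lt with hab | hab
  · obtain ⟨rfl, rfl⟩ : a = 0 ∧ b = 0 := ⟨by linarith, by linarith⟩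
    simp
  have hcompl : 1 - a / (a + b) = b / (a + b) := by field_simp; ring
  have hA := mul_log_le_mul_log_div_add ha hab ht0
  have hB := mul_log_le_mul_log_div_add hb hab (sub_pos.mpr ht1)
  rw [hcompl]
  linarith

theorem optimal_discriminator_general {X : Type*} [Fintype X] (P Q : X → ℝ)
    (hP0 : ∀ x, 0 ≤ P x) (hQ0 : ∀ x, 0 ≤ Q x) :
    (∀ x, 0 < P x + Q x → ∀ t ∈ Set.Ioo (0 : ℝ) 1,
      P x * Real.log t + Q x * Real.log (1 - t) ≤
        P x * Real.log (P x / (P x + Q x)) +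
          Q x * Real.log (1 - P x / (P x + Q x))) ∧
    (∀ d : X → ℝ, (∀ x, d x ∈ Set.Ioo (0 : ℝ) 1) →
      (∑ x, P x * Real.log (d x)) + (∑ x, Q x * Real.log (1 - d x)) ≤
        (∑ x, P x * Real.log (P x / (P x + Q x))) +
          (∑ x, Q x * Real.log (1 - P x / (P x + Q x)))) := by
  refine ⟨fun x _ t ht => mul_log_add_mul_log_one_sub_le (hP0 x) (hQ0 x) ht, fun d hd => ?_⟩
  rw [← sum_add_distrib, ← sum_add_distrib]
  exact sum_le_sum fun x _ => mul_log_add_mul_log_one_sub_le (hP0 x) (hQ0 x) (hd x)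

/-- Optimal GAN discriminator: pointwise, `t = P x / (P x + Q x)` maximizes
`P x * log t + Q x * log (1 - t)` over `t ∈ (0,1)`, hence the discriminator
`d* x = P x / (P x + Q x)` maximizes `f d = ∑ P x log (d x) + ∑ Q x log (1 - d x)`. -/
theorem optimal_discriminator {X : Type*} [Fintype X] (P Q : X → ℝ)
    (hP0 : ∀ x, 0 ≤ P x) (hQ0 : ∀ x, 0 ≤ Q x)
    (hP1 : ∑ x, P x = 1) (hQ1 : ∑ x, Q x = 1) :
    (∀ x, 0 < P x + Q x → ∀ t ∈ Set.Ioo (0 : ℝ) 1,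
      P x * Real.log t + Q x * Real.log (1 - t) ≤
        P x * Real.log (P x / (P x + Q x)) +
          Q x * Real.log (1 - P x / (P x + Q x))) ∧
    (∀ d : X → ℝ, (∀ x, d x ∈ Set.Ioo (0 : ℝ) 1) →
      (∑ x, P x * Real.log (d x)) + (∑ x, Q x * Real.log (1 - d x)) ≤
        (∑ x, P x * Real.log (P x / (P x + Q x))) +
          (∑ x, Q x * Real.log (1 - P x / (P x + Q x)))) :=
  optimal_discriminator_general P Q hP0 hQ0
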